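/- For 1 ≤ d ≤ n-4, every Schröder path in an n×n grid with d diagonal steps, area 1, and ending in NE belongs to exactly one of the two sets: the 'upper' set of paths of the form D^j NNEE γ' NE NE or γ' NE D^j NNEE γ'', and the 'lower' set of paths of the form D^j NNEE γ' D NE or γ' NDE D^j NE γ'' (with γ', γ'' ∈ {NE,D}^*, j ≥ 0); i.e., these two sets are disjoint and their union is the whole set. -/

import Mathlib

open scoped Classical

inductive Step : Type
  | N | E | D
deriving DecidableEq, Repr

instance : Fintype Step :=
  ⟨{Step.N, Step.E, Step.D}, by intro x; cases x <;> simp⟩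

open Step

/-- number of occurrences of the letter `s` in the word `w` -/
def cnt (s : Step) (w : List Step) : ℕ := w.count s

/-- Schröder (or Dyck, if no `D`s) path in an `n × n` grid: every prefix has at
least as many `N`s as `E`s, and the totals agree. -/
def IsSchroeder (w : List Step) : Prop :=
  (∀ p : List Step, p <+: w → cnt E p ≤ cnt N p) ∧ cnt N w = cnt E w

/-- words that are concatenations of blocks `NE` and `D` -/
inductive IsNED : List Step → Prop
  | nil : IsNED []
  | ne {w} : IsNED w → IsNED (N :: E :: w)
  | d {w} : IsNED w → IsNED (D :: w)

/-- area of a Schröder path: the number of lower triangles between the path and the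
main diagonal, computed as the sum over `N` and `D` steps of the height
`#N - #E` of the starting point of the step above the diagonal. -/
def areaAux : ℕ → List Step → ℕ
  | _, [] => 0
  | h, N :: w => h + areaAux (h+1) w
  | h, D :: w => h + areaAux h w
  | h, E :: w => areaAux (h-1) w

def area (w : List Step) : ℕ := areaAux 0 w

/-- area of an `N/E` lattice path in a rectangular grid: the number of boxes under
the path, i.e. the sum over `E` steps of the number of `N` steps before it. -/
def areaNEAux : ℕ → List Step → ℕ
  | _, [] => 0
  | h, N :: w => areaNEAux (h+1) w
  | h, E :: w => h + areaNEAux h w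
  | h, D :: w => areaNEAux h w

def areaNE (w : List Step) : ℕ := areaNEAux 0 w

/-- number of `N`s occurring before the `(j+1)`-st `E` (`j` is 0-indexed);
this is the height of the path above the horizontal interval `[j, j+1]`. -/
def nBefore : List Step → ℕ → ℕ
  | [], _ => 0
  | N :: w, j => 1 + nBefore w j
  | E :: w, j => if j = 0 then 0 else nBefore w (j-1)
  | D :: w, j => nBefore w j

/-- number of `E`s occurring before the `(i+1)`-st `N` (`i` is 0-indexed). -/
def eBefore : List Step → ℕ → ℕ
  | [], _ => 0
  | E :: w, i => 1 + eBefore w i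
  | N :: w, i => if i = 0 then 0 else eBefore w (i-1)
  | D :: w, i => eBefore w i

/-- number of `D`s occurring after the `e`-th `E` (`e` is 1-indexed). -/
def dAfterE : List Step → ℕ → ℕ
  | [], _ => 0
  | E :: w, e => if e ≤ 1 then cnt D w else dAfterE w (e-1)
  | D :: w, e => dAfterE w e
  | N :: w, e => dAfterE w e

/-- Combined computation of `bounce(Γ(γ)) + numph(γ)` along the bounce path of
`Γ(γ)`.  Here `g` is the Schröder path, `w = Γ(g)` is the underlying Dyck path,
`nn` its size; the bounce path has corners (peaks) at the positions
`j₀ = 0, jₖ₊₁ = nBefore w jₖ`; each intermediate return `jₖ₊₁ < nn` contributes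
`nn - jₖ₊₁` to the bounce of `Γ(g)`, and the peak with corner at `jₖ` is the start
of the `(jₖ+1)`-st east step, contributing to numph the number of diagonal steps of
`g` above it, i.e. after that east step. -/
def bounceAux (g w : List Step) (nn : ℕ) : ℕ → ℕ → ℕ
  | 0, _ => 0
  | fuel+1, j =>
      dAfterE g (j+1) +
        (if nn ≤ nBefore w j ∨ nBefore w j ≤ j then 0
         else (nn - nBefore w j) + bounceAux g w nn fuel (nBefore w j))

/-- the bounce statistic of a Schröder path: `bounce(Γ(γ)) + numph(γ)` -/
def bounce (g : List Step) : ℕ :=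
  let w := g.filter (fun s => s ≠ D)
  let nn := cnt E w
  if nn = 0 then 0 else bounceAux g w nn g.length 0

/-- the (signed) area coordinate `a_i = m·i - (#E before the (i+1)-st N)` of line `i`
(0-indexed) for a path in an `n × mn` grid. -/
def aLine (m : ℕ) (g : List Step) (i : ℕ) : ℤ := (m : ℤ) * i - eBefore g i

/-- an `(n, mn)`-Dyck path: `n` north steps, `mn` east steps, no diagonal steps,
staying weakly above the main diagonal. -/
def IsParkingPath (n m : ℕ) (g : List Step) : Prop :=
  (∀ s ∈ g, s ≠ D) ∧ cnt N g = n ∧ cnt E g = m * n ∧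
    ∀ p : List Step, p <+: g → cnt E p ≤ m * cnt N p

/-- an `(n, mn)`-parking function: an `(n,mn)`-Dyck path labelled by a permutation
`w` of `{0, …, n-1}` whose labels increase within each column. -/
def IsParking (n m : ℕ) (g : List Step) (w : Fin n → Fin n) : Prop :=
  IsParkingPath n m g ∧ Function.Bijective w ∧
    ∀ i j : Fin n, (j : ℕ) = (i : ℕ) + 1 → eBefore g (i : ℕ) = eBefore g (j : ℕ) → w i < w j

/-- the diagonal inversion statistic of an `(n, mn)`-parking function -/
def dinv (n m : ℕ) (g : List Step) (w : Fin n → Fin n) : ℤ :=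
  ∑ i : Fin n, ∑ j : Fin n,
    if (i : ℕ) < (j : ℕ) then
      (if w i < w j then max 0 ((m : ℤ) - |aLine m g (i : ℕ) - aLine m g (j : ℕ)|) else 0) +
        (if w j < w i then max 0 ((m : ℤ) - |aLine m g (j : ℕ) - aLine m g (i : ℕ) + 1|) else 0)
    else 0

/-- the number of descents of the word `w` -/
def desNum (n : ℕ) (w : Fin n → Fin n) : ℕ :=
  ((Finset.range (n-1)).filter fun i =>
    ∃ hj : i + 1 < n, w ⟨i+1, hj⟩ < w ⟨i, Nat.lt_of_succ_lt hj⟩).card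

/-- the major index of the word `w` (with positions 1-indexed as usual) -/
def majStat (n : ℕ) (w : Fin n → Fin n) : ℕ :=
  ∑ i ∈ (Finset.range (n-1)).filter (fun i =>
    ∃ hj : i + 1 < n, w ⟨i+1, hj⟩ < w ⟨i, Nat.lt_of_succ_lt hj⟩), (i+1)

/-- the reading word of a labelled path in an `n × mn` grid: labels are read along
diagonals parallel to the main diagonal, starting with the farthest diagonal,
each diagonal being read from top-right to bottom-left. -/
def readWord (n m : ℕ) (g : List Step) (lab : ℕ → ℕ) : List ℕ :=
  ((List.range (m * n + 1)).map fun k =>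
    (((List.range n).reverse.filter fun i => aLine m g i = (m * n : ℤ) - k).map lab)).flatten

/-- the labelling function `ℕ → ℕ` associated to a permutation of `Fin n` -/
def labOf {n : ℕ} (w : Fin n → Fin n) : ℕ → ℕ :=
  fun i => if h : i < n then (w ⟨i, h⟩ : ℕ) else 0

/-- one step of the algorithm `φ`, on the reversed word: find the rightmost
(i.e. first in the reversed word) east step not followed by an east step,
and swap it with the letter following it. -/
def phiRevAux : List Step → List Step
  | a :: E :: t => if a ≠ E then E :: a :: t else a :: phiRevAux (E :: t)
  | a :: t => a :: phiRevAux t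
  | [] => []

/-- one step of the algorithm `φ` -/
def phiStep (w : List Step) : List Step := (phiRevAux w.reverse).reverse

/-- the sequence `φ(γ) = (γ₀, γ₁, …, γ_{bounce γ})` produced by the algorithm -/
def phiSeq (g : List Step) : List (List Step) :=
  (List.range (bounce g + 1)).map fun i => phiStep^[i] g

/-- the union of all sequences `φ(γ)` over area-0 Schröder paths with `n` blocks -/
def phiUniv (n : ℕ) : Set (List Step) :=
  {p | ∃ g, IsNED g ∧ cnt N g + cnt D g = n ∧ p ∈ phiSeq g}

/-- the map replacing each block `NE` by `N` and each `D` by `E` -/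
def theta : List Step → List Step
  | N :: E :: w => N :: theta w
  | D :: w => E :: theta w
  | _ :: w => theta w
  | [] => []

/-- the cells of the hook-shaped Young diagram `(d, 1^{n-d})` (row 0 is the arm). -/
def hookCells (n d : ℕ) : Finset (ℕ × ℕ) :=
  ((Finset.range d).image fun c => ((0 : ℕ), c)) ∪
    ((Finset.range (n - d + 1)).image fun r => (r, (0 : ℕ)))

/-- a standard Young tableau of hook shape `(d, 1^{n-d})`: `pos i` is the cell
`(row, column)` containing the entry `i+1`; entries increase along rows and columns. -/
structure HookSYT (n d : ℕ) where
  pos : Fin n → ℕ × ℕ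
  mem : ∀ i, pos i ∈ hookCells n d
  inj : Function.Injective pos
  rowInc : ∀ i j : Fin n, (pos i).1 = (pos j).1 → (pos i).2 < (pos j).2 → i < j
  colInc : ∀ i j : Fin n, (pos i).2 = (pos j).2 → (pos i).1 < (pos j).1 → i < j

/-- the descent set of a standard Young tableau: entries `i ∈ {1, …, n-1}` such that
the entry `i+1` lies in a strictly higher row than `i`. -/
def Des {n d : ℕ} (τ : HookSYT n d) : Finset ℕ :=
  (Finset.Icc 1 (n-1)).filter fun i =>
    ∃ hi : i < n, ∃ hi' : i - 1 < n, (τ.pos ⟨i - 1, hi'⟩).1 < (τ.pos ⟨i, hi⟩).1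

/-- the major index of a standard Young tableau -/
def majT {n d : ℕ} (τ : HookSYT n d) : ℕ := ∑ i ∈ Des τ, i

/-- the number of descents of a standard Young tableau -/
def desT {n d : ℕ} (τ : HookSYT n d) : ℕ := (Des τ).card

/-- the maximum of the descent set -/
def maxDes {n d : ℕ} (τ : HookSYT n d) : ℕ := (Des τ).sup id

/-- the map `M_{n,d}`: the path `γ₁γ₂⋯γₙ` with `γₙ = NE`, `γ_{n-i} = NE` if
`i ∈ Des τ` and `γ_{n-i} = D` otherwise -/
def Mmap (n d : ℕ) (τ : HookSYT n d) : List Step :=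
  (((List.range n).map fun j =>
    if j = n - 1 then [N, E]
    else if (n - 1 - j) ∈ Des τ then [N, E] else [D])).flatten

/-- the map `S_{n,d}`: the path `γ₁⋯γ_{n-1}` with `γ_{n-i} = NNEE` if
`i = max Des τ` and `1 ∈ Des τ`, `γ_{n-i} = NDE` if `i = max Des τ` and
`1 ∉ Des τ`, `γ_{n-i} = NE` if `i = 1` or `i ∈ Des τ ∖ {max Des τ}`, and
`γ_{n-i} = D` otherwise. -/
def Smap (n d : ℕ) (τ : HookSYT n d) : List Step :=
  (((List.range (n-1)).map fun j =>
    if (n - 1 - j) = maxDes τ then (if 1 ∈ Des τ then [N,N,E,E] else [N,D,E])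
    else if (n - 1 - j) = 1 ∨ (n - 1 - j) ∈ Des τ then [N,E] else [D])).flatten

/-- the set `V_{n,d}` of Schröder paths of the form `Dʲ NNEE u` or `Dʲ NDE u`
with `u ∈ {NE,D}* NE`, having `n-d+1` north steps and `d-1` diagonal steps. -/
def Vset (n d : ℕ) : Set (List Step) :=
  {g | (∃ j u, IsNED u ∧
      (g = List.replicate j D ++ [N,N,E,E] ++ (u ++ [N,E]) ∨
       g = List.replicate j D ++ [N,D,E] ++ (u ++ [N,E]))) ∧
     cnt N g = n - d + 1 ∧ cnt D g = d - 1}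

/-- Schröder paths in an `n × n` grid with `dd` diagonal steps, area `a`,
ending with `NE` -/
def SchT (n dd a : ℕ) : Set (List Step) :=
  {g | IsSchroeder g ∧ cnt D g = dd ∧ cnt N g = n - dd ∧ area g = a ∧ ∃ u, g = u ++ [N, E]}

/-- the 'upper' forms: `Dʲ NNEE γ' NE NE` or `γ' NE Dʲ NNEE γ''` -/
def UpperForm (g : List Step) : Prop :=
  (∃ j u, IsNED u ∧ g = List.replicate j D ++ [N,N,E,E] ++ u ++ [N,E,N,E]) ∨
  (∃ u j v, IsNED u ∧ g = u ++ [N,E] ++ List.replicate j D ++ [N,N,E,E] ++ v)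

/-- the 'lower' forms: `Dʲ NNEE γ' D NE` or `γ' NDE Dʲ NE γ''` -/
def LowerForm (g : List Step) : Prop :=
  (∃ j u, IsNED u ∧ g = List.replicate j D ++ [N,N,E,E] ++ u ++ [D,N,E]) ∨
  (∃ u j v, IsNED u ∧ g = u ++ [N,D,E] ++ List.replicate j D ++ [N,E] ++ v)

/-- the number of distinct columns of the path -/
def Tcols (n : ℕ) (g : List Step) : ℕ :=
  ((Finset.range n).image fun i => eBefore g i).card

/-- the `q`-integer `[k]_q = 1 + q + ⋯ + q^{k-1}` as a polynomial -/
noncomputable def qInt (k : ℕ) : Polynomial ℤ := ∑ i ∈ Finset.range k, Polynomial.X ^ i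

/-- the `q`-factorial `[k]!_q` -/
noncomputable def qFact (k : ℕ) : Polynomial ℤ := ∏ i ∈ Finset.range k, qInt (i+1)

/-! An area-one Schröder path is `u B v` with `u`, `v` words in the blocks `NE`, `D` and a single
defect block `B ∈ {NNEE, NDE}`, and this factorisation is unique since the defect block is the
first place where the path leaves the diagonal. Which of the four forms the path takes is read off
from the blocks adjacent to the defect and at the end of the path; uniqueness of the factorisation
makes the upper and lower forms exclusive. The path `Dʲ NNEE NE`, which is of neither form, has
only three north steps and is excluded by `1 ≤ d ≤ n - 4`. -/

def IsAreaOneBlock (B : List Step) : Prop := B = [N, N, E, E] ∨ B = [N, D, E]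

namespace IsNED

lemma replicate_D (j : ℕ) : IsNED (List.replicate j D) := by
  induction j with
  | zero => exact .nil
  | succ j ih => exact .d ih

lemma append {u v : List Step} (hu : IsNED u) (hv : IsNED v) : IsNED (u ++ v) := by
  induction hu with
  | nil => exact hv
  | ne _ ih => exact .ne ih
  | d _ ih => exact .d ih

lemma eq_nil_or_eq_append_last_block {v : List Step} (hv : IsNED v) :
    v = [] ∨ ∃ w, IsNED w ∧ (v = w ++ [D] ∨ v = w ++ [N, E]) := by
  induction hv with
  | nil => exact .inl rfl
  | ne _ ih =>
    rcases ih with rfl | ⟨w, hw, rfl | rfl⟩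
    · exact .inr ⟨[], .nil, .inr rfl⟩
    · exact .inr ⟨N :: E :: w, hw.ne, .inl rfl⟩
    · exact .inr ⟨N :: E :: w, hw.ne, .inr rfl⟩
  | d _ ih =>
    rcases ih with rfl | ⟨w, hw, rfl | rfl⟩
    · exact .inr ⟨[], .nil, .inl rfl⟩
    · exact .inr ⟨D :: w, hw.d, .inl rfl⟩
    · exact .inr ⟨D :: w, hw.d, .inr rfl⟩

lemma eq_replicate_or_first_NE {v : List Step} (hv : IsNED v) :
    (∃ j, v = List.replicate j D) ∨
      ∃ j w, IsNED w ∧ v = List.replicate j D ++ [N, E] ++ w := by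
  induction hv with
  | nil => exact .inl ⟨0, rfl⟩
  | @ne w hw _ => exact .inr ⟨0, w, hw, rfl⟩
  | d _ ih =>
    rcases ih with ⟨j, rfl⟩ | ⟨j, w, hw, rfl⟩
    · exact .inl ⟨j + 1, rfl⟩
    · exact .inr ⟨j + 1, w, hw, rfl⟩

lemma eq_replicate_or_last_NE {u : List Step} (hu : IsNED u) :
    (∃ j, u = List.replicate j D) ∨
      ∃ w j, IsNED w ∧ u = w ++ [N, E] ++ List.replicate j D := by
  induction hu with
  | nil => exact .inl ⟨0, rfl⟩
  | ne _ ih =>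
    rcases ih with ⟨j, rfl⟩ | ⟨w, j, hw, rfl⟩
    · exact .inr ⟨[], j, .nil, rfl⟩
    · exact .inr ⟨N :: E :: w, j, hw.ne, rfl⟩
  | d _ ih =>
    rcases ih with ⟨j, rfl⟩ | ⟨w, j, hw, rfl⟩
    · exact .inl ⟨j + 1, rfl⟩
    · exact .inr ⟨D :: w, j, hw.d, rfl⟩

lemma append_areaOneBlock_inj {u₁ u₂ B₁ B₂ v₁ v₂ : List Step} (hu₁ : IsNED u₁) (hu₂ : IsNED u₂)
    (hB₁ : IsAreaOneBlock B₁) (hB₂ : IsAreaOneBlock B₂)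
    (h : u₁ ++ B₁ ++ v₁ = u₂ ++ B₂ ++ v₂) : u₁ = u₂ ∧ B₁ = B₂ ∧ v₁ = v₂ := by
  induction hu₁ generalizing u₂ with
  | nil =>
    cases hu₂ <;> rcases hB₁ with rfl | rfl <;> rcases hB₂ with rfl | rfl <;> simp_all
  | @ne w _ ih =>
    cases hu₂ with
    | nil => rcases hB₂ with rfl | rfl <;> simp_all
    | @ne w₂ hw₂ => simpa using ih hw₂ (by simpa using h)
    | d => simp at h
  | @d w _ ih =>
    cases hu₂ with
    | nil => rcases hB₂ with rfl | rfl <;> simp_all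
    | ne => simp at h
    | @d w₂ hw₂ => simpa using ih hw₂ (by simpa using h)

end IsNED

lemma eq_E_cons_of_areaAux_succ_eq_zero {h : ℕ} :
    ∀ {w : List Step}, areaAux (h + 1) w = 0 → w = [] ∨ ∃ w', w = E :: w' ∧ areaAux h w' = 0
  | [], _ => .inl rfl
  | E :: w, hw => .inr ⟨w, rfl, by simpa [areaAux] using hw⟩
  | N :: _, hw | D :: _, hw => by simp [areaAux] at hw

namespace IsSchroeder

lemma of_balanced_append {b g : List Step} (h : IsSchroeder (b ++ g)) (hb : cnt N b = cnt E b) :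
    IsSchroeder g := by
  refine ⟨fun p ⟨t, hp⟩ => ?_, ?_⟩
  · have := h.1 (b ++ p) ⟨t, by rw [List.append_assoc, hp]⟩
    simp only [cnt, List.count_append] at this hb ⊢
    omega
  · have := h.2
    simp only [cnt, List.count_append] at this hb ⊢
    omega

lemma not_E_cons {g : List Step} : ¬ IsSchroeder (E :: g) := fun h => by
  simpa [cnt] using h.1 [E] ⟨g, rfl⟩

lemma isNED_of_area_eq_zero : ∀ {g : List Step}, IsSchroeder g → area g = 0 → IsNED g
  | [], _, _ => .nil
  | E :: _, hs, _ => absurd hs not_E_cons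
  | D :: w, hs, ha =>
    .d (isNED_of_area_eq_zero (hs.of_balanced_append (b := [D]) rfl)
      (by simpa [area, areaAux] using ha))
  | N :: E :: w, hs, ha =>
    .ne (isNED_of_area_eq_zero (hs.of_balanced_append (b := [N, E]) rfl)
      (by simpa [area, areaAux] using ha))
  | [N], hs, _ => by simpa [cnt] using hs.2
  | N :: N :: _, _, ha | N :: D :: _, _, ha => by simp [area, areaAux] at ha

lemma exists_eq_append_areaOneBlock :
    ∀ {g : List Step}, IsSchroeder g → area g = 1 →
      ∃ u B v, IsNED u ∧ IsAreaOneBlock B ∧ IsNED v ∧ g = u ++ B ++ v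
  | [], _, ha => by simp [area, areaAux] at ha
  | E :: _, hs, _ => absurd hs not_E_cons
  | D :: w, hs, ha => by
    obtain ⟨u, B, v, hu, hB, hv, rfl⟩ := exists_eq_append_areaOneBlock
      (hs.of_balanced_append (b := [D]) rfl) (by simpa [area, areaAux] using ha)
    exact ⟨D :: u, B, v, hu.d, hB, hv, rfl⟩
  | N :: E :: w, hs, ha => by
    obtain ⟨u, B, v, hu, hB, hv, rfl⟩ := exists_eq_append_areaOneBlock
      (hs.of_balanced_append (b := [N, E]) rfl) (by simpa [area, areaAux] using ha)
    exact ⟨N :: E :: u, B, v, hu.ne, hB, hv, rfl⟩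
  | [N], hs, _ => by simpa [cnt] using hs.2
  | N :: N :: w, hs, ha => by
    have hw : areaAux 2 w = 0 := by simpa [area, areaAux] using ha
    obtain rfl | ⟨w, rfl, hw'⟩ := eq_E_cons_of_areaAux_succ_eq_zero hw
    · simpa [cnt] using hs.2
    obtain rfl | ⟨v, rfl, hv⟩ := eq_E_cons_of_areaAux_succ_eq_zero hw'
    · simpa [cnt] using hs.2
    exact ⟨[], [N, N, E, E], v, .nil, .inl rfl,
      (hs.of_balanced_append (b := [N, N, E, E]) rfl).isNED_of_area_eq_zero hv, rfl⟩
  | N :: D :: w, hs, ha => by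
    have hw : areaAux 1 w = 0 := by simpa [area, areaAux] using ha
    obtain rfl | ⟨v, rfl, hv⟩ := eq_E_cons_of_areaAux_succ_eq_zero hw
    · simpa [cnt] using hs.2
    exact ⟨[], [N, D, E], v, .nil, .inr rfl,
      (hs.of_balanced_append (b := [N, D, E]) rfl).isNED_of_area_eq_zero hv, rfl⟩

end IsSchroeder

lemma UpperForm.not_lowerForm {g : List Step} (hU : UpperForm g) : ¬ LowerForm g := by
  rcases hU with ⟨j, u, hu, rfl⟩ | ⟨u, j, v, hu, rfl⟩ <;>
    rintro (⟨j', u', hu', h⟩ | ⟨u', j', v', hu', h⟩)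
  · have h : List.replicate j D ++ [N, N, E, E] ++ (u ++ [N, E, N, E]) =
        List.replicate j' D ++ [N, N, E, E] ++ (u' ++ [D, N, E]) := by simpa using h
    obtain ⟨-, -, hv⟩ := (IsNED.replicate_D j).append_areaOneBlock_inj (IsNED.replicate_D j')
      (.inl rfl) (.inl rfl) h
    simpa using congrArg List.reverse hv
  · have h : List.replicate j D ++ [N, N, E, E] ++ (u ++ [N, E, N, E]) =
        u' ++ [N, D, E] ++ (List.replicate j' D ++ [N, E] ++ v') := by simpa using h
    simpa using ((IsNED.replicate_D j).append_areaOneBlock_inj hu' (.inl rfl) (.inr rfl) h).2.1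
  · have h : u ++ [N, E] ++ List.replicate j D ++ [N, N, E, E] ++ v =
        List.replicate j' D ++ [N, N, E, E] ++ (u' ++ [D, N, E]) := by simpa using h
    have hprefix := ((hu.append (.ne .nil)).append (IsNED.replicate_D j)).append_areaOneBlock_inj
      (IsNED.replicate_D j') (.inl rfl) (.inl rfl) h
    simpa [List.count_replicate] using congrArg (List.count N) hprefix.1
  · have h : u ++ [N, E] ++ List.replicate j D ++ [N, N, E, E] ++ v =
        u' ++ [N, D, E] ++ (List.replicate j' D ++ [N, E] ++ v') := by simpa using h
    have hprefix := ((hu.append (.ne .nil)).append (IsNED.replicate_D j)).append_areaOneBlock_inj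
      hu' (.inl rfl) (.inr rfl) h
    simpa using hprefix.2.1

lemma upperForm_or_lowerForm {g : List Step} (hs : IsSchroeder g) (ha : area g = 1)
    (hN : 3 < cnt N g) (hend : ∃ u, g = u ++ [N, E]) : UpperForm g ∨ LowerForm g := by
  obtain ⟨u, B, v, hu, hB | hB, hv, rfl⟩ := hs.exists_eq_append_areaOneBlock ha <;> subst hB <;>
    obtain ⟨u₀, hu₀⟩ := hend
  · rcases hu.eq_replicate_or_last_NE with ⟨j, rfl⟩ | ⟨u', j, hu', rfl⟩
    · rcases hv.eq_nil_or_eq_append_last_block with rfl | ⟨w, hw, rfl | rfl⟩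
      · simpa using congrArg List.reverse hu₀
      · simpa using congrArg List.reverse hu₀
      rcases hw.eq_nil_or_eq_append_last_block with rfl | ⟨w', hw', rfl | rfl⟩
      · simp [cnt, List.count_replicate] at hN
      · exact .inr (.inl ⟨j, w', hw', by simp⟩)
      · exact .inl (.inl ⟨j, w', hw', by simp⟩)
    · exact .inl (.inr ⟨u', j, v, hu', by simp⟩)
  · rcases hv.eq_replicate_or_first_NE with ⟨_ | j, rfl⟩ | ⟨j, v, hv, rfl⟩
    · simpa using congrArg List.reverse hu₀
    · simpa [List.replicate_succ'] using congrArg List.reverse hu₀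
    · exact .inr (.inr ⟨u, j, v, hu, by simp⟩)

/-- For `1 ≤ d ≤ n-4`, every Schröder path in an `n×n` grid with `d`
diagonal steps, area `1`, ending in `NE`, belongs to exactly one of the 'upper' and
'lower' sets of forms. -/
theorem stmt19 (n d : ℕ) (hd1 : 1 ≤ d) (hd2 : d ≤ n - 4) :
    ∀ g : List Step, IsSchroeder g → cnt D g = d → cnt N g = n - d → area g = 1 →
      (∃ u, g = u ++ [N, E]) →
      Xor' (UpperForm g) (LowerForm g) := by
  intro g hs _ hN ha hend
  rcases upperForm_or_lowerForm hs ha (by omega) hend with hU | hL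
  · exact .inl ⟨hU, hU.not_lowerForm⟩
  · exact .inr ⟨hL, fun hU => hU.not_lowerForm hL⟩
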